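/- arXiv:2006.12284 — 6 statements merged into one kernel-verified Lean document; each statement's English description precedes it below -/
import Mathlib

section
/- Let r ∈ L¹(ℝ₊) and let θ : ℝ₊ → ℝ be a continuous function satisfying |θ(x)| ≤ 2∫ₓ^∞ |r(t)||θ(t)| dt for all x ≥ 0. Then θ ≡ 0 on ℝ₊. -/
/-!
Extend `|θ|` and `2|r|` by zero to functions `f` and `g` on `ℝ`, so that `f` is bounded,
`g ∈ L¹(ℝ)` and `f x ≤ ∫_{(x,∞)} g f` for every `x`. If `f` vanishes on `(a,∞) \ T` and
`∫_T g ≤ 1/2`, then every bound `D` of `f` on `[a,∞)` improves to `D/2`, so `f = 0` there.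
By absolute continuity of the integral, `T = (X,∞)` works for `X` large, and `T = (x-δ,x]` works
for all `x` with one `δ > 0`; stepping down from `X` by `δ` reaches every point.
-/

open MeasureTheory Set Filter Topology

lemma le_zero_of_forall_le_half {β : Type*} {f : β → ℝ} {s : Set β} {C : ℝ}
    (hC : ∀ t ∈ s, f t ≤ C) (hhalf : ∀ D, (∀ t ∈ s, f t ≤ D) → ∀ t ∈ s, f t ≤ D / 2) :
    ∀ t ∈ s, f t ≤ 0 := by
  have hpow : ∀ n : ℕ, ∀ t ∈ s, f t ≤ C / 2 ^ n := by
    intro n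
    induction n with
    | zero => simpa using hC
    | succ n ih => simpa [pow_succ, div_div] using hhalf _ ih
  have hlim : Tendsto (fun n : ℕ => C / 2 ^ n) atTop (𝓝 0) := by
    simpa using tendsto_const_nhds.div_atTop (tendsto_pow_atTop_atTop_of_one_lt one_lt_two)
  exact fun t ht => ge_of_tendsto' hlim fun n => hpow n t ht

lemma setIntegral_mul_le_mul_setIntegral {α : Type*} [MeasurableSpace α] {μ : Measure α}
    {f g : α → ℝ} {s T : Set α} {D : ℝ} (hs : MeasurableSet s) (hT : MeasurableSet T)
    (hgT : IntegrableOn g T μ) (hg : 0 ≤ g) (hf : 0 ≤ f) (hD : 0 ≤ D)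
    (hfD : ∀ t ∈ s, f t ≤ D) (hfT : ∀ t ∈ s \ T, f t = 0) :
    ∫ t in s, g t * f t ∂μ ≤ D * ∫ t in T, g t ∂μ := by
  have hpt : ∀ t ∈ s, g t * f t ≤ D * T.indicator g t := by
    intro t hts
    by_cases htT : t ∈ T
    · rw [indicator_of_mem htT, mul_comm D]
      exact mul_le_mul_of_nonneg_left (hfD t hts) (hg t)
    · rw [hfT t ⟨hts, htT⟩, indicator_of_notMem htT]
      simp
  calc ∫ t in s, g t * f t ∂μ ≤ ∫ t in s, D * T.indicator g t ∂μ :=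
        integral_mono_of_nonneg (ae_of_all _ fun t => mul_nonneg (hg t) (hf t))
          (((integrable_indicator_iff hT).2 hgT).integrableOn.const_mul D)
          ((ae_restrict_iff' hs).2 (ae_of_all _ hpt))
    _ = D * ∫ t in s ∩ T, g t ∂μ := by rw [integral_const_mul, setIntegral_indicator hT]
    _ ≤ D * ∫ t in T, g t ∂μ :=
        mul_le_mul_of_nonneg_left
          (setIntegral_mono_set hgT (ae_of_all _ hg) inter_subset_right.eventuallyLE) hD

lemma exists_pos_forall_setIntegral_Ioc_le {g : ℝ → ℝ} (hg : Integrable g) {ε : ℝ} (hε : 0 < ε) :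
    ∃ δ > 0, ∀ x, ∫ t in Ioc (x - δ) x, g t ≤ ε := by
  have hvol : Tendsto (volume ∘ fun p : ℝ × ℝ => Ioc (p.2 - p.1) p.2)
      (𝓝[>] 0 ×ˢ 𝓟 univ) (𝓝 0) := by
    have : (volume ∘ fun p : ℝ × ℝ => Ioc (p.2 - p.1) p.2) = fun p => ENNReal.ofReal p.1 := by
      ext p; simp [Real.volume_Ioc]
    rw [this, ← ENNReal.ofReal_zero]
    exact (ENNReal.tendsto_ofReal (tendsto_nhdsWithin_of_tendsto_nhds tendsto_id)).comp tendsto_fst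
  obtain ⟨δ, hδ, hδpos⟩ := ((eventually_prod_principal_iff.1
    ((hg.tendsto_setIntegral_nhds_zero hvol).eventually (eventually_le_nhds hε))).and
    self_mem_nhdsWithin).exists
  exact ⟨δ, hδpos, fun x => hδ x (mem_univ x)⟩

lemma eqOn_zero_of_le_setIntegral_Ioi_mul {f g : ℝ → ℝ} {a : ℝ} {T : Set ℝ}
    (hg0 : 0 ≤ g) (hf0 : 0 ≤ f) (hfb : BddAbove (range f))
    (hf : ∀ x, f x ≤ ∫ t in Ioi x, g t * f t) (hT : MeasurableSet T) (hgT : IntegrableOn g T)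
    (hsmall : ∫ t in T, g t ≤ 1 / 2) (hfT : ∀ t ∈ Ioi a \ T, f t = 0) :
    ∀ t ∈ Ici a, f t = 0 := by
  obtain ⟨C, hC⟩ := hfb
  suffices hle : ∀ t ∈ Ici a, f t ≤ 0 from fun t ht => le_antisymm (hle t ht) (hf0 t)
  refine le_zero_of_forall_le_half (fun t _ => hC (mem_range_self t)) fun D hD y hy => ?_
  have hD0 : 0 ≤ D := (hf0 y).trans (hD y hy)
  calc f y ≤ ∫ t in Ioi y, g t * f t := hf y
    _ ≤ D * ∫ t in T, g t :=
        setIntegral_mul_le_mul_setIntegral measurableSet_Ioi hT hgT hg0 hf0 hD0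
          (fun t ht => hD t (mem_Ici.2 (le_trans hy ht.le)))
          fun t ht => hfT t ⟨mem_Ioi.2 (lt_of_le_of_lt hy ht.1), ht.2⟩
    _ ≤ D * (1 / 2) := mul_le_mul_of_nonneg_left hsmall hD0
    _ = D / 2 := by ring

theorem eq_zero_of_le_setIntegral_Ioi_mul {f g : ℝ → ℝ} (hg : Integrable g) (hg0 : 0 ≤ g)
    (hf0 : 0 ≤ f) (hfb : BddAbove (range f)) (hf : ∀ x, f x ≤ ∫ t in Ioi x, g t * f t) :
    f = 0 := by
  obtain ⟨X, hX⟩ := ((tendsto_integral_Ioi_zero (f := g) (μ := volume) tendsto_id).eventually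
    (eventually_le_nhds one_half_pos)).exists
  obtain ⟨δ, hδ, hδg⟩ := exists_pos_forall_setIntegral_Ioc_le hg one_half_pos
  have hvanish : ∀ n : ℕ, ∀ t ∈ Ici (X - n * δ), f t = 0 := by
    intro n
    induction n with
    | zero =>
      simpa using eqOn_zero_of_le_setIntegral_Ioi_mul hg0 hf0 hfb hf measurableSet_Ioi
        hg.integrableOn hX (by simp)
    | succ n ih =>
      have hstep := eqOn_zero_of_le_setIntegral_Ioi_mul hg0 hf0 hfb hf measurableSet_Ioc
        hg.integrableOn (hδg (X - n * δ)) fun t ht => ih t (not_le.1 fun h => ht.2 ⟨ht.1, h⟩).le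
      intro t ht
      exact hstep t (by rw [mem_Ici] at ht ⊢; push_cast at ht; linarith)
  funext t
  obtain ⟨n, hn⟩ := exists_nat_ge ((X - t) / δ)
  exact hvanish n t (by rw [div_le_iff₀ hδ] at hn; rw [mem_Ici]; linarith)

theorem stmt_0_general (r θ : ℝ → ℝ)
    (hr : IntegrableOn r (Ici 0))
    (hθb : ∃ C, ∀ x ∈ Ici (0 : ℝ), |θ x| ≤ C)
    (hineq : ∀ x ∈ Ici (0 : ℝ), |θ x| ≤ 2 * ∫ t in Ioi x, |r t| * |θ t|) :
    ∀ x ∈ Ici (0 : ℝ), θ x = 0 := by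
  set f := (Ici (0 : ℝ)).indicator fun t => |θ t|
  set g := (Ici (0 : ℝ)).indicator fun t => 2 * |r t|
  have hf0 : 0 ≤ f := indicator_nonneg fun t _ => abs_nonneg _
  have hg0 : 0 ≤ g := indicator_nonneg fun t _ => by positivity
  have hfb : BddAbove (range f) := by
    obtain ⟨C, hC⟩ := hθb
    refine ⟨max C 0, forall_mem_range.2 fun t => ?_⟩
    by_cases ht : t ∈ Ici 0
    · simp only [f, indicator_of_mem ht]
      exact le_max_of_le_left (hC t ht)
    · simp [f, ht]
  have hf : ∀ x, f x ≤ ∫ t in Ioi x, g t * f t := by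
    intro x
    by_cases hx : x ∈ Ici 0
    · have hint : ∫ t in Ioi x, g t * f t = 2 * ∫ t in Ioi x, |r t| * |θ t| := by
        rw [← integral_const_mul]
        refine setIntegral_congr_fun measurableSet_Ioi fun t ht => ?_
        have ht0 : t ∈ Ici (0 : ℝ) := mem_Ici.2 (le_trans hx ht.le)
        simp only [f, g, indicator_of_mem ht0]
        ring
      simpa [hint, f, hx] using hineq x hx
    · rw [show f x = 0 from indicator_of_notMem hx _]
      exact setIntegral_nonneg measurableSet_Ioi fun t _ => mul_nonneg (hg0 t) (hf0 t)
  have hg : Integrable g := (integrable_indicator_iff measurableSet_Ici).2 (hr.abs.const_mul 2)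
  intro x hx
  simpa [f, hx] using congr_fun (eq_zero_of_le_setIntegral_Ioi_mul hg hg0 hf0 hfb hf) x

/-- If `r ∈ L¹(ℝ₊)` and `θ` is a bounded continuous function on `ℝ₊` satisfying
`|θ(x)| ≤ 2∫ₓ^∞ |r(t)||θ(t)| dt` for all `x ≥ 0`, then `θ ≡ 0` on `ℝ₊`. -/
theorem stmt_0 (r θ : ℝ → ℝ)
    (hr : IntegrableOn r (Ici 0))
    (hθc : ContinuousOn θ (Ici 0))
    (hθb : ∃ C, ∀ x ∈ Ici (0 : ℝ), |θ x| ≤ C)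
    (hineq : ∀ x ∈ Ici (0 : ℝ), |θ x| ≤ 2 * ∫ t in Ioi x, |r t| * |θ t|) :
    ∀ x ∈ Ici (0 : ℝ), θ x = 0 :=
  stmt_0_general r θ hr hθb hineq
end

section
/- Let v₁, v₂ ∈ L¹(ℝ₊) be real-valued. Then the differential equation φ'(x) = -v₁(x) sin(2φ(x)) - v₂(x) cos(2φ(x)) admits a unique real-valued absolutely continuous solution φ on ℝ₊ with φ(x) → 0 as x → ∞. -/
/-!
A solution tending to `0` is exactly a fixed point of `ψ ↦ -∫ t in Ioi x, F t (ψ t)`, where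
`F t y = -v₁ t sin (2y) - v₂ t cos (2y)` is Lipschitz in `y` with the integrable modulus
`L = 2 (|v₁| + |v₂|)`. On bounded continuous functions this map is a contraction as soon as the
unknown is prescribed outside an interval `(a, c]` with `∫ t in Ioc a c, L t ≤ 1/2`, or on a tail
`(a, ∞)` of `L`-mass at most `1/2`. Since `L` is integrable, `[0, ∞)` is the union of such a tail
and finitely many such intervals, so the unique fixed point can be extended step by step to the
left; a fixed point on `[a, ∞)` restricts to the fixed point on `[c, ∞)`, which gives uniqueness.
-/

open MeasureTheory Set Filter Topology Function Real
open scoped NNReal BoundedContinuousFunction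

theorem existsUnique_isFixedPt_of_lipschitzOnWith {X : Type*} [MetricSpace X] [CompleteSpace X]
    {f : X → X} {s : Set X} {K : ℝ≥0} (hK : K < 1) (hs : IsClosed s) (hne : s.Nonempty)
    (hf : MapsTo f s s) (hlip : LipschitzOnWith K f s) (hfix : ∀ x, IsFixedPt f x → x ∈ s) :
    ∃! x, IsFixedPt f x := by
  obtain ⟨x₀, hx₀⟩ := hne
  obtain ⟨x, -, hx, -⟩ := ContractingWith.exists_fixedPoint' hs.isComplete hf
    ⟨hK, hlip.mapsToRestrict hf⟩ hx₀ (edist_ne_top _ _)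
  refine ⟨x, hx, fun y hy => ?_⟩
  have hdist : dist y x ≤ K * dist y x := by
    simpa only [hy.eq, hx.eq] using hlip.dist_le_mul y (hfix y hy) x (hfix x hx)
  have hK' : (K : ℝ) < 1 := hK
  exact dist_le_zero.1 (by nlinarith [dist_nonneg (x := y) (y := x)])

variable {E : Type*} [NormedAddCommGroup E]

structure IntegrableLipschitzField (F : ℝ → E → E) (L : ℝ → ℝ≥0) : Prop where
  integrable_lipschitzConst : Integrable fun t => (L t : ℝ)
  integrable_zero : Integrable fun t => F t 0
  lipschitzWith : ∀ t, LipschitzWith (L t) (F t)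
  aestronglyMeasurable_comp : ∀ φ : ℝ → E, Continuous φ → AEStronglyMeasurable fun t => F t (φ t)

theorem IntegrableLipschitzField.integrable_comp {F : ℝ → E → E} {L : ℝ → ℝ≥0}
    (hF : IntegrableLipschitzField F L) (ψ : ℝ →ᵇ E) : Integrable fun t => F t (ψ t) := by
  refine (hF.integrable_zero.norm.add (hF.integrable_lipschitzConst.mul_const ‖ψ‖)).mono'
    (hF.aestronglyMeasurable_comp ψ ψ.continuous) (ae_of_all _ fun t => ?_)
  calc ‖F t (ψ t)‖ ≤ ‖F t 0‖ + ‖F t (ψ t) - F t 0‖ := norm_le_insert' _ _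
    _ ≤ ‖F t 0‖ + L t * ‖ψ t - 0‖ := by
        gcongr; simpa only [dist_eq_norm] using (hF.lipschitzWith t).dist_le_mul (ψ t) 0
    _ ≤ ‖F t 0‖ + L t * ‖ψ‖ := by rw [sub_zero]; gcongr; exact ψ.norm_coe_le_norm t

variable [NormedSpace ℝ E]

theorem tendsto_integral_Ioi_atTop {g : ℝ → E} (hg : Integrable g) :
    Tendsto (fun x => ∫ t in Ioi x, g t) atTop (𝓝 0) := by
  have := tendsto_setIntegral_of_antitone (μ := volume) (fun x : ℝ => measurableSet_Ioi)
    (fun x y h => Ioi_subset_Ioi h) ⟨0, hg.integrableOn⟩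
  have hempty : (⋂ x : ℝ, Ioi x) = ∅ :=
    eq_empty_of_forall_notMem fun t ht => lt_irrefl t (mem_iInter.1 ht t)
  simpa [hempty] using this

theorem exists_ge_integral_Ioi_eq {g : ℝ → ℝ} (hg : Integrable g) {a v : ℝ} (hv : 0 < v)
    (hva : v ≤ ∫ t in Ioi a, g t) : ∃ c, a ≤ c ∧ ∫ t in Ioi c, g t = v := by
  obtain ⟨b, hbv, hab⟩ :=
    (((tendsto_integral_Ioi_atTop hg).eventually_lt_const hv).and (eventually_ge_atTop a)).exists
  obtain ⟨c, hc, hcv⟩ := intermediate_value_Icc' hab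
    (hg.integrableOn.continuousOn_Ici_primitive_Ioi.mono Icc_subset_Ici_self) ⟨hbv.le, hva⟩
  exact ⟨c, hc.1, hcv⟩

noncomputable def tailIntegral (a : ℝ) {g : ℝ → E} (hg : IntegrableOn g (Ioi a)) : ℝ →ᵇ E :=
  BoundedContinuousFunction.ofNormedAddCommGroup (fun x => ∫ t in Ioi (max x a), g t)
    (hg.continuousOn_Ici_primitive_Ioi.comp_continuous (continuous_id.max continuous_const)
      fun x => le_max_right x a)
    (∫ t in Ioi a, ‖g t‖) fun x =>
      (norm_integral_le_integral_norm _).trans <| setIntegral_mono_set hg.norm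
        (ae_of_all _ fun _ => norm_nonneg _) (Ioi_subset_Ioi (le_max_right x a)).eventuallyLE

theorem tailIntegral_apply (a : ℝ) {g : ℝ → E} (hg : IntegrableOn g (Ioi a)) (x : ℝ) :
    tailIntegral a hg x = ∫ t in Ioi (max x a), g t := rfl

def IsDecayingSolution (F : ℝ → E → E) (a : ℝ) (φ : ℝ → E) : Prop :=
  ∃ g : ℝ → E, IntegrableOn g (Ici a) ∧ (∀ᵐ x ∂(volume.restrict (Ici a)), g x = F x (φ x)) ∧
    (∀ x ∈ Ici a, φ x = φ a + ∫ t in Ioc a x, g t) ∧ Tendsto φ atTop (𝓝 0)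

theorem isDecayingSolution_congr {F G : ℝ → E → E} {a : ℝ} (h : EqOn F G (Ici a))
    (φ : ℝ → E) : IsDecayingSolution F a φ ↔ IsDecayingSolution G a φ := by
  have hae : ∀ᵐ x ∂(volume.restrict (Ici a)), F x = G x :=
    (ae_restrict_iff' measurableSet_Ici).2 (ae_of_all _ h)
  refine exists_congr fun g => and_congr_right fun _ => and_congr_left fun _ => ?_
  constructor <;> intro hg <;> filter_upwards [hg, hae] with x hx hFG <;> simp_all

theorem eq_neg_integral_Ioi_of_tendsto {a : ℝ} {g : ℝ → E} {φ : ℝ → E}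
    (hg : IntegrableOn g (Ioi a)) (hφ : ∀ x ∈ Ici a, φ x = φ a + ∫ t in Ioc a x, g t)
    (hlim : Tendsto φ atTop (𝓝 0)) {x : ℝ} (hx : a ≤ x) : φ x = -∫ t in Ioi x, g t := by
  have hφ' : ∀ y, a ≤ y → φ y = φ a + ∫ t in a..y, g t := fun y hy => by
    rw [intervalIntegral.integral_of_le hy, ← hφ y hy]
  have hlim' : Tendsto φ atTop (𝓝 (φ a + ∫ t in Ioi a, g t)) :=
    (tendsto_const_nhds.add (intervalIntegral_tendsto_integral_Ioi a hg tendsto_id)).congr'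
      ((eventually_ge_atTop a).mono fun y hy => (hφ' y hy).symm)
  have hsum : φ a + ∫ t in Ioi a, g t = 0 := tendsto_nhds_unique hlim' hlim
  rw [hφ' x hx, ← intervalIntegral.integral_Ioi_sub_Ioi hg hx]
  linear_combination (norm := module) hsum

namespace IntegrableLipschitzField

variable {F : ℝ → E → E} {L : ℝ → ℝ≥0} (hF : IntegrableLipschitzField F L)
include hF

/-- Its fixed points are the solutions of `φ' = F t φ` on `[a, ∞)` tending to `0`, frozen below
`a`. -/
noncomputable def tailOp (a : ℝ) (ψ : ℝ →ᵇ E) : ℝ →ᵇ E :=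
  -tailIntegral a (hF.integrable_comp ψ).integrableOn

theorem tailOp_apply (a : ℝ) (ψ : ℝ →ᵇ E) (x : ℝ) :
    hF.tailOp a ψ x = -∫ t in Ioi (max x a), F t (ψ t) := rfl

theorem dist_tailOp_le (a : ℝ) {s : Set ℝ} (hs : MeasurableSet s) {ψ ψ' : ℝ →ᵇ E}
    (h : EqOn ψ ψ' sᶜ) :
    dist (hF.tailOp a ψ) (hF.tailOp a ψ') ≤ (∫ t in Ioi a ∩ s, (L t : ℝ)) * dist ψ ψ' := by
  set δ := fun t => s.indicator (fun t => (L t : ℝ)) t * dist ψ ψ'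
  have hδ0 : ∀ t, 0 ≤ δ t := fun t =>
    mul_nonneg (indicator_nonneg (fun t _ => (L t).2) t) dist_nonneg
  have hδ : Integrable δ := (hF.integrable_lipschitzConst.indicator hs).mul_const _
  have hpointwise : ∀ t, ‖F t (ψ t) - F t (ψ' t)‖ ≤ δ t := by
    intro t
    by_cases ht : t ∈ s
    · rw [← dist_eq_norm, show δ t = L t * dist ψ ψ' from by simp [δ, ht]]
      exact ((hF.lipschitzWith t).dist_le_mul _ _).trans
        (mul_le_mul_of_nonneg_left (ψ.dist_coe_le_dist t) (L t).2)
    · simp [δ, h ht, indicator_of_notMem ht]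
  refine (BoundedContinuousFunction.dist_le (by positivity)).2 fun x => ?_
  rw [tailOp_apply, tailOp_apply, dist_neg_neg, dist_eq_norm,
    ← integral_sub (hF.integrable_comp ψ).integrableOn (hF.integrable_comp ψ').integrableOn]
  calc ‖∫ t in Ioi (max x a), (F t (ψ t) - F t (ψ' t))‖
      ≤ ∫ t in Ioi (max x a), δ t :=
        norm_integral_le_of_norm_le hδ.integrableOn (ae_of_all _ hpointwise)
    _ ≤ ∫ t in Ioi a, δ t :=
        setIntegral_mono_set hδ.integrableOn (ae_of_all _ hδ0)
          (Ioi_subset_Ioi (le_max_right x a)).eventuallyLE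
    _ = (∫ t in Ioi a ∩ s, (L t : ℝ)) * dist ψ ψ' := by
        rw [integral_mul_const, setIntegral_indicator hs]

theorem tailOp_apply_of_le {a x : ℝ} (hx : a ≤ x) (ψ : ℝ →ᵇ E) :
    hF.tailOp a ψ x = -∫ t in Ioi x, F t (ψ t) := by
  rw [tailOp_apply, max_eq_left hx]

theorem tailOp_eq_of_eqOn {a c : ℝ} {ψ ψ' : ℝ →ᵇ E} (h : EqOn ψ ψ' (Ioi c)) {x : ℝ}
    (hx : c ≤ max x a) : hF.tailOp a ψ x = hF.tailOp a ψ' x := by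
  rw [tailOp_apply, tailOp_apply]
  congr 1
  exact setIntegral_congr_fun measurableSet_Ioi fun t ht => by rw [h (hx.trans_lt ht)]

theorem isFixedPt_tailOp_of_le {a c : ℝ} (hac : a ≤ c) {ψ : ℝ →ᵇ E}
    (hψ : IsFixedPt (hF.tailOp a) ψ) :
    IsFixedPt (hF.tailOp c) (hF.tailOp c ψ) ∧ EqOn (hF.tailOp c ψ) ψ (Ici c) := by
  have hfreeze : ∀ x, hF.tailOp c ψ x = ψ (max x c) := fun x => by
    conv_rhs => rw [← hψ.eq, tailOp_apply, max_eq_left (hac.trans (le_max_right x c))]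
    rfl
  refine ⟨BoundedContinuousFunction.ext fun x => ?_, fun x hx => ?_⟩
  · refine hF.tailOp_eq_of_eqOn (c := c) (fun t ht => ?_) (le_max_right x c)
    rw [hfreeze, max_eq_left ht.le]
  · rw [hfreeze, max_eq_left (mem_Ici.1 hx)]

theorem isDecayingSolution_of_isFixedPt {a : ℝ} {ψ : ℝ →ᵇ E} (hψ : IsFixedPt (hF.tailOp a) ψ) :
    IsDecayingSolution F a ψ := by
  have hint := hF.integrable_comp ψ
  have hψ_eq : ∀ x, a ≤ x → ψ x = -∫ t in Ioi x, F t (ψ t) := fun x hx => by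
    rw [← hF.tailOp_apply_of_le hx, hψ.eq]
  refine ⟨fun t => F t (ψ t), hint.integrableOn, ae_of_all _ fun _ => rfl, fun x hx => ?_, ?_⟩
  · rw [hψ_eq x hx, hψ_eq a le_rfl, ← intervalIntegral.integral_of_le hx,
      ← intervalIntegral.integral_Ioi_sub_Ioi hint.integrableOn hx]
    abel
  · simpa using ((tendsto_integral_Ioi_atTop hint).neg).congr'
      ((eventually_ge_atTop a).mono fun x hx => (hψ_eq x hx).symm)

theorem exists_isFixedPt_eqOn_of_isDecayingSolution {a : ℝ} {φ : ℝ → E}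
    (hφ : IsDecayingSolution F a φ) :
    ∃ ψ : ℝ →ᵇ E, IsFixedPt (hF.tailOp a) ψ ∧ EqOn φ ψ (Ici a) := by
  obtain ⟨g, hg, hgF, hφ_ftc, hlim⟩ := hφ
  have hg' : IntegrableOn g (Ioi a) := hg.mono_set Ioi_subset_Ici_self
  have hφ_eq : ∀ x, a ≤ x → φ x = (-tailIntegral a hg') x := fun x hx => by
    rw [eq_neg_integral_Ioi_of_tendsto hg' hφ_ftc hlim hx, BoundedContinuousFunction.neg_apply,
      tailIntegral_apply, max_eq_left hx]
  refine ⟨-tailIntegral a hg', BoundedContinuousFunction.ext fun x => ?_,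
    fun x hx => hφ_eq x hx⟩
  rw [tailOp_apply, BoundedContinuousFunction.neg_apply, tailIntegral_apply, neg_inj]
  have hsub : Ioi (max x a) ⊆ Ici a := fun t ht => (le_max_right x a).trans ht.le
  refine setIntegral_congr_ae measurableSet_Ioi <| (ae_restrict_iff' measurableSet_Ioi).1 ?_
  filter_upwards [ae_restrict_of_ae_restrict_of_subset hsub hgF,
    ae_restrict_mem measurableSet_Ioi] with t ht hmem
  rw [ht, ← hφ_eq t ((le_max_right x a).trans hmem.le)]

variable [CompleteSpace E]

theorem existsUnique_isFixedPt_tailOp_of_integral_le {a : ℝ}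
    (hsmall : ∫ t in Ioi a, (L t : ℝ) ≤ 2⁻¹) : ∃! ψ, IsFixedPt (hF.tailOp a) ψ := by
  refine existsUnique_isFixedPt_of_lipschitzOnWith (K := 2⁻¹) (by norm_num) isClosed_univ
    univ_nonempty (mapsTo_univ _ _) (LipschitzOnWith.of_dist_le_mul fun ψ _ ψ' _ => ?_)
    fun _ _ => mem_univ _
  refine (hF.dist_tailOp_le a MeasurableSet.univ (s := univ) (by simp)).trans ?_
  rw [inter_univ]
  push_cast
  gcongr

theorem existsUnique_isFixedPt_tailOp_of_integral_Ioc_le {a c : ℝ} (hac : a ≤ c)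
    (hsmall : ∫ t in Ioc a c, (L t : ℝ) ≤ 2⁻¹) (hc : ∃! ψ, IsFixedPt (hF.tailOp c) ψ) :
    ∃! ψ, IsFixedPt (hF.tailOp a) ψ := by
  obtain ⟨φ, hφ, hφ_unique⟩ := hc
  refine existsUnique_isFixedPt_of_lipschitzOnWith (K := 2⁻¹) (s := {ψ | EqOn ψ φ (Ioi c)})
    (by norm_num) ?_ ⟨φ, fun _ _ => rfl⟩ ?_ ?_ ?_
  · simp only [EqOn, ofPred_forall]
    exact isClosed_biInter fun t _ => isClosed_eq (continuous_eval_const t) continuous_const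
  · intro ψ hψ x hx
    rw [hF.tailOp_eq_of_eqOn hψ (le_max_of_le_left hx.le), hF.tailOp_apply_of_le (hac.trans hx.le),
      ← hF.tailOp_apply_of_le hx.le, hφ.eq]
  · refine LipschitzOnWith.of_dist_le_mul fun ψ hψ ψ' hψ' => ?_
    refine (hF.dist_tailOp_le a measurableSet_Iic (s := Iic c) ?_).trans ?_
    · rw [compl_Iic]
      exact hψ.trans hψ'.symm
    · rw [Ioi_inter_Iic]
      push_cast
      gcongr
  · intro ψ hψ x hx
    obtain ⟨hfix, heq⟩ := hF.isFixedPt_tailOp_of_le hac hψ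
    rw [← heq (mem_Ici.2 hx.le), hφ_unique _ hfix]

theorem existsUnique_isFixedPt_tailOp (a : ℝ) : ∃! ψ, IsFixedPt (hF.tailOp a) ψ := by
  suffices h : ∀ n : ℕ, ∀ a, ∫ t in Ioi a, (L t : ℝ) ≤ (n + 1) / 2 →
      ∃! ψ, IsFixedPt (hF.tailOp a) ψ by
    obtain ⟨n, hn⟩ := exists_nat_ge (2 * ∫ t in Ioi a, (L t : ℝ))
    exact h n a (by linarith)
  intro n
  induction n with
  | zero =>
    intro a ha
    exact hF.existsUnique_isFixedPt_tailOp_of_integral_le (by linarith)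
  | succ n ih =>
    intro a ha
    by_cases hn : ∫ t in Ioi a, (L t : ℝ) ≤ (n + 1) / 2
    · exact ih a hn
    obtain ⟨c, hac, hc⟩ := exists_ge_integral_Ioi_eq hF.integrable_lipschitzConst
      (by positivity) (le_of_not_ge hn)
    refine hF.existsUnique_isFixedPt_tailOp_of_integral_Ioc_le hac ?_ (ih c hc.le)
    rw [← intervalIntegral.integral_of_le hac,
      ← intervalIntegral.integral_Ioi_sub_Ioi hF.integrable_lipschitzConst.integrableOn hac, hc]
    push_cast at ha
    linarith

theorem existsUnique_isDecayingSolution (a : ℝ) :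
    ∃ φ, IsDecayingSolution F a φ ∧ ∀ ψ, IsDecayingSolution F a ψ → EqOn ψ φ (Ici a) := by
  obtain ⟨φ, hφ, hφ_unique⟩ := hF.existsUnique_isFixedPt_tailOp a
  refine ⟨φ, hF.isDecayingSolution_of_isFixedPt hφ, fun ψ hψ => ?_⟩
  obtain ⟨ψ', hψ', hψψ'⟩ := hF.exists_isFixedPt_eqOn_of_isDecayingSolution hψ
  rw [← hφ_unique ψ' hψ']
  exact hψψ'

end IntegrableLipschitzField

theorem integrableLipschitzField_trig {V₁ V₂ : ℝ → ℝ} (h₁ : Integrable V₁) (h₂ : Integrable V₂) :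
    IntegrableLipschitzField (fun t y => -V₁ t * sin (2 * y) - V₂ t * cos (2 * y))
      (fun t => 2 * (‖V₁ t‖₊ + ‖V₂ t‖₊)) where
  integrable_lipschitzConst := by
    simpa only [NNReal.coe_mul, NNReal.coe_add, NNReal.coe_ofNat, coe_nnnorm, Pi.add_apply] using
      (h₁.norm.add h₂.norm).const_mul 2
  integrable_zero := by simpa using h₂.neg
  lipschitzWith t := by
    refine LipschitzWith.of_dist_le_mul fun y y' => ?_
    simp only [Real.dist_eq, NNReal.coe_mul, NNReal.coe_add, coe_nnnorm, Real.norm_eq_abs]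
    calc |(-V₁ t * sin (2 * y) - V₂ t * cos (2 * y)) - (-V₁ t * sin (2 * y') - V₂ t * cos (2 * y'))|
        = |-(V₁ t * (sin (2 * y) - sin (2 * y'))) - V₂ t * (cos (2 * y) - cos (2 * y'))| := by
          congr 1; ring
      _ ≤ |V₁ t| * |sin (2 * y) - sin (2 * y')| + |V₂ t| * |cos (2 * y) - cos (2 * y')| := by
          refine (abs_sub _ _).trans ?_
          rw [abs_neg, abs_mul, abs_mul]
      _ ≤ |V₁ t| * |2 * y - 2 * y'| + |V₂ t| * |2 * y - 2 * y'| := by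
          gcongr ?_ * ?_ + ?_ * ?_
          exacts [abs_sin_sub_sin_le _ _, abs_cos_sub_cos_le _ _]
      _ = ((2 : ℝ≥0) : ℝ) * (|V₁ t| + |V₂ t|) * |y - y'| := by
          rw [← mul_sub, abs_mul, abs_two]; push_cast; ring
  aestronglyMeasurable_comp φ hφ :=
    (h₁.aestronglyMeasurable.neg.mul
      (continuous_sin.comp (continuous_const.mul hφ)).aestronglyMeasurable).sub
    (h₂.aestronglyMeasurable.mul
      (continuous_cos.comp (continuous_const.mul hφ)).aestronglyMeasurable)

/-- For real-valued `v₁, v₂ ∈ L¹(ℝ₊)`, the ODE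
`φ' = -v₁ sin(2φ) - v₂ cos(2φ)` has a unique (up to values on `ℝ₊`)
absolutely continuous real-valued solution on `ℝ₊` tending to `0` at infinity.
Absolute continuity is expressed via an integrable derivative `g` satisfying
the ODE a.e. together with the fundamental theorem of calculus identity. -/
theorem stmt_1 (v₁ v₂ : ℝ → ℝ)
    (hv₁ : IntegrableOn v₁ (Ici 0)) (hv₂ : IntegrableOn v₂ (Ici 0)) :
    ∃ φ : ℝ → ℝ,
      (∃ g : ℝ → ℝ, IntegrableOn g (Ici 0) ∧
        (∀ᵐ x ∂(volume.restrict (Ici (0:ℝ))),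
          g x = -v₁ x * Real.sin (2 * φ x) - v₂ x * Real.cos (2 * φ x)) ∧
        (∀ x ∈ Ici (0:ℝ), φ x = φ 0 + ∫ t in Ioc (0:ℝ) x, g t) ∧
        Filter.Tendsto φ Filter.atTop (nhds 0)) ∧
      (∀ ψ : ℝ → ℝ,
        (∃ g : ℝ → ℝ, IntegrableOn g (Ici 0) ∧
          (∀ᵐ x ∂(volume.restrict (Ici (0:ℝ))),
            g x = -v₁ x * Real.sin (2 * ψ x) - v₂ x * Real.cos (2 * ψ x)) ∧
          (∀ x ∈ Ici (0:ℝ), ψ x = ψ 0 + ∫ t in Ioc (0:ℝ) x, g t) ∧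
          Filter.Tendsto ψ Filter.atTop (nhds 0)) →
        ∀ x ∈ Ici (0:ℝ), ψ x = φ x) := by
  set V₁ := (Ici (0 : ℝ)).indicator v₁
  set V₂ := (Ici (0 : ℝ)).indicator v₂
  have hF := integrableLipschitzField_trig (hv₁.integrable_indicator measurableSet_Ici)
    (hv₂.integrable_indicator measurableSet_Ici)
  have hcongr := isDecayingSolution_congr (a := 0)
    (F := fun t y => -V₁ t * sin (2 * y) - V₂ t * cos (2 * y))
    (G := fun t y => -v₁ t * sin (2 * y) - v₂ t * cos (2 * y))
    fun t ht => by simp only [V₁, V₂, indicator_of_mem ht]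
  obtain ⟨φ, hφ, hφ_unique⟩ := hF.existsUnique_isDecayingSolution 0
  exact ⟨φ, (hcongr φ).1 hφ, fun ψ hψ => hφ_unique ψ ((hcongr ψ).2 hψ)⟩
end

section
/- Fix x₀ ≥ 0 and real-valued integrable functions v₁, v₂ on (x₀,∞) with ∫_{x₀}^∞ (|v₁| + |v₂|) < 1/4. Define Y as the space of real-valued absolutely continuous functions f on (x₀,∞) with f(x) → 0 as x → ∞ and norm ‖f‖_Y = ∫_{x₀}^∞ |f'(t)| dt. Then the operator (Tf)(x) = ∫ₓ^∞ (v₁(t) sin(2f(t)) + v₂(t) cos(2f(t))) dt maps Y to Y and satisfies ‖Tf₁ - Tf₂‖_Y ≤ (1/2)‖f₁ - f₂‖_Y. -/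
open MeasureTheory Set

/-- `f` belongs to the space `Y` of real absolutely continuous functions on `(x₀,∞)`
vanishing at infinity, with (integrable) derivative `g`: `f(x) = -∫ₓ^∞ g(t) dt`. -/
def MemY (x₀ : ℝ) (f g : ℝ → ℝ) : Prop :=
  IntegrableOn g (Ioi x₀) ∧ ∀ x ∈ Ici x₀, f x = -∫ t in Ioi x, g t

/-! Since `sin` and `cos` are `1`-Lipschitz, the integrand of `Tf₁ - Tf₂` is bounded pointwise by
`2 |f₁ - f₂| (|v₁| + |v₂|)`, and `|f₁ - f₂| ≤ ‖f₁ - f₂‖_Y` because `f(x) = -∫ₓ^∞ f'`. Integrating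
gives `‖Tf₁ - Tf₂‖_Y ≤ 2 ‖f₁ - f₂‖_Y ∫ (|v₁| + |v₂|) ≤ ½ ‖f₁ - f₂‖_Y`. That `Tf ∈ Y` only needs
its integrand to be integrable: it is dominated by `|v₁| + |v₂|`, and it is measurable because
`f` is continuous on `(x₀, ∞)`. -/

open Real

lemma abs_mul_sin_add_mul_cos_le (v₁ v₂ a : ℝ) :
    |v₁ * sin a + v₂ * cos a| ≤ |v₁| + |v₂| := by
  calc |v₁ * sin a + v₂ * cos a| ≤ |v₁| * |sin a| + |v₂| * |cos a| := by
        simpa only [abs_mul] using abs_add_le (v₁ * sin a) (v₂ * cos a)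
    _ ≤ |v₁| * 1 + |v₂| * 1 := by
        gcongr |v₁| * ?_ + |v₂| * ?_
        exacts [abs_sin_le_one a, abs_cos_le_one a]
    _ = |v₁| + |v₂| := by ring

lemma abs_mul_sin_add_mul_cos_sub_le (v₁ v₂ a b : ℝ) :
    |(v₁ * sin a + v₂ * cos a) - (v₁ * sin b + v₂ * cos b)| ≤ |a - b| * (|v₁| + |v₂|) := by
  calc |(v₁ * sin a + v₂ * cos a) - (v₁ * sin b + v₂ * cos b)|
      = |v₁ * (sin a - sin b) + v₂ * (cos a - cos b)| := by ring_nf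
    _ ≤ |v₁| * |sin a - sin b| + |v₂| * |cos a - cos b| := by
        simpa only [abs_mul] using abs_add_le (v₁ * (sin a - sin b)) (v₂ * (cos a - cos b))
    _ ≤ |v₁| * |a - b| + |v₂| * |a - b| := by
        gcongr |v₁| * ?_ + |v₂| * ?_
        exacts [abs_sin_sub_sin_le a b, abs_cos_sub_cos_le a b]
    _ = |a - b| * (|v₁| + |v₂|) := by ring

section Integrand

variable {α : Type*} [MeasurableSpace α] {μ : Measure α} {v₁ v₂ f : α → ℝ}

lemma integrable_mul_sin_add_mul_cos (hv₁ : Integrable v₁ μ) (hv₂ : Integrable v₂ μ)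
    (hf : AEStronglyMeasurable f μ) :
    Integrable (fun t => v₁ t * sin (2 * f t) + v₂ t * cos (2 * f t)) μ := by
  refine (hv₁.abs.add hv₂.abs).mono' ?_ (.of_forall fun t => abs_mul_sin_add_mul_cos_le _ _ _)
  have h2f : AEStronglyMeasurable (fun t => 2 * f t) μ := hf.const_mul 2
  exact (hv₁.1.mul (continuous_sin.comp_aestronglyMeasurable h2f)).add
    (hv₂.1.mul (continuous_cos.comp_aestronglyMeasurable h2f))

lemma integral_abs_mul_sin_add_mul_cos_sub_le {f₁ f₂ : α → ℝ} {C : ℝ}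
    (hv₁ : Integrable v₁ μ) (hv₂ : Integrable v₂ μ) (hC : ∀ᵐ t ∂μ, |f₁ t - f₂ t| ≤ C) :
    ∫ t, |(v₁ t * sin (2 * f₁ t) + v₂ t * cos (2 * f₁ t)) -
        (v₁ t * sin (2 * f₂ t) + v₂ t * cos (2 * f₂ t))| ∂μ
      ≤ 2 * C * ∫ t, (|v₁ t| + |v₂ t|) ∂μ := by
  rw [← integral_const_mul]
  refine integral_mono_of_nonneg (.of_forall fun t => abs_nonneg _)
    ((hv₁.abs.add hv₂.abs).const_mul _) ?_
  filter_upwards [hC] with t ht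
  calc _ ≤ |2 * f₁ t - 2 * f₂ t| * (|v₁ t| + |v₂ t|) := abs_mul_sin_add_mul_cos_sub_le _ _ _ _
    _ = 2 * |f₁ t - f₂ t| * (|v₁ t| + |v₂ t|) := by
        rw [← mul_sub, abs_mul, abs_two]
    _ ≤ 2 * C * (|v₁ t| + |v₂ t|) := by gcongr

end Integrand

namespace MemY

variable {x₀ : ℝ} {f g f₁ g₁ f₂ g₂ : ℝ → ℝ}

lemma sub (h₁ : MemY x₀ f₁ g₁) (h₂ : MemY x₀ f₂ g₂) : MemY x₀ (f₁ - f₂) (g₁ - g₂) := by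
  refine ⟨h₁.1.sub h₂.1, fun x hx => ?_⟩
  have hsub : Ioi x ⊆ Ioi x₀ := Ioi_subset_Ioi hx
  rw [Pi.sub_apply, h₁.2 x hx, h₂.2 x hx, Pi.sub_def,
    integral_sub (h₁.1.mono_set hsub) (h₂.1.mono_set hsub)]
  ring

lemma abs_le_integral_abs (h : MemY x₀ f g) {x : ℝ} (hx : x₀ ≤ x) :
    |f x| ≤ ∫ t in Ioi x₀, |g t| := by
  rw [h.2 x hx, abs_neg]
  exact abs_integral_le_integral_abs.trans <| setIntegral_mono_set h.1.abs
    (.of_forall fun t => abs_nonneg _) (Ioi_subset_Ioi hx).eventuallyLE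

lemma eq_intervalIntegral_sub (h : MemY x₀ f g) {x : ℝ} (hx : x₀ ≤ x) :
    f x = (∫ t in x₀..x, g t) - ∫ t in Ioi x₀, g t := by
  rw [h.2 x hx, ← intervalIntegral.integral_Ioi_sub_Ioi h.1 hx]
  ring

lemma aestronglyMeasurable (h : MemY x₀ f g) :
    AEStronglyMeasurable f (volume.restrict (Ioi x₀)) := by
  have hprim : Continuous fun x => ∫ t in x₀..x, g t ∂(volume.restrict (Ioi x₀)) :=
    Integrable.continuous_primitive h.1 x₀
  refine (hprim.sub (continuous_const (y := ∫ t in Ioi x₀, g t))).aestronglyMeasurable.congr ?_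
  filter_upwards [ae_restrict_mem measurableSet_Ioi] with x hx
  rw [h.eq_intervalIntegral_sub hx.le, Pi.sub_apply, intervalIntegral.integral_of_le hx.le,
    intervalIntegral.integral_of_le hx.le, Measure.restrict_restrict measurableSet_Ioc,
    inter_eq_self_of_subset_left Ioc_subset_Ioi_self]

end MemY

theorem stmt_2_general (x₀ : ℝ) (v₁ v₂ : ℝ → ℝ)
    (hv₁ : IntegrableOn v₁ (Ioi x₀)) (hv₂ : IntegrableOn v₂ (Ioi x₀))
    (hsmall : (∫ t in Ioi x₀, (|v₁ t| + |v₂ t|)) < 1/4) :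
    (∀ f g : ℝ → ℝ, MemY x₀ f g →
      MemY x₀
        (fun x => ∫ t in Ioi x, (v₁ t * Real.sin (2 * f t) + v₂ t * Real.cos (2 * f t)))
        (fun t => -(v₁ t * Real.sin (2 * f t) + v₂ t * Real.cos (2 * f t)))) ∧
    (∀ f₁ g₁ f₂ g₂ : ℝ → ℝ, MemY x₀ f₁ g₁ → MemY x₀ f₂ g₂ →
      (∫ t in Ioi x₀,
          |(-(v₁ t * Real.sin (2 * f₁ t) + v₂ t * Real.cos (2 * f₁ t))) -
            (-(v₁ t * Real.sin (2 * f₂ t) + v₂ t * Real.cos (2 * f₂ t)))|)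
        ≤ (1/2) * ∫ t in Ioi x₀, |g₁ t - g₂ t|) := by
  constructor
  · intro f g hf
    refine ⟨(integrable_mul_sin_add_mul_cos hv₁ hv₂ hf.aestronglyMeasurable).neg, fun x _ => ?_⟩
    rw [integral_neg, neg_neg]
  intro f₁ g₁ f₂ g₂ hf₁ hf₂
  set C := ∫ t in Ioi x₀, |g₁ t - g₂ t|
  have hC : ∀ᵐ t ∂volume.restrict (Ioi x₀), |f₂ t - f₁ t| ≤ C := by
    filter_upwards [ae_restrict_mem measurableSet_Ioi] with t ht
    rw [abs_sub_comm]
    exact (hf₁.sub hf₂).abs_le_integral_abs ht.le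
  simp_rw [neg_sub_neg]
  calc _ ≤ 2 * C * ∫ t in Ioi x₀, (|v₁ t| + |v₂ t|) :=
        integral_abs_mul_sin_add_mul_cos_sub_le hv₁ hv₂ hC
    _ ≤ 2 * C * (1 / 4) := by gcongr
    _ = 1 / 2 * C := by ring

/-- The operator `(Tf)(x) = ∫ₓ^∞ (v₁(t) sin(2f(t)) + v₂(t) cos(2f(t))) dt`
maps `Y` into `Y` (with derivative the negative of the integrand) and is a
`1/2`-contraction for the norm `‖f‖_Y = ∫_{x₀}^∞ |f'|`, provided
`∫_{x₀}^∞ (|v₁| + |v₂|) < 1/4`. -/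
theorem stmt_2 (x₀ : ℝ) (hx₀ : 0 ≤ x₀) (v₁ v₂ : ℝ → ℝ)
    (hv₁ : IntegrableOn v₁ (Ioi x₀)) (hv₂ : IntegrableOn v₂ (Ioi x₀))
    (hsmall : (∫ t in Ioi x₀, (|v₁ t| + |v₂ t|)) < 1/4) :
    (∀ f g : ℝ → ℝ, MemY x₀ f g →
      MemY x₀
        (fun x => ∫ t in Ioi x, (v₁ t * Real.sin (2 * f t) + v₂ t * Real.cos (2 * f t)))
        (fun t => -(v₁ t * Real.sin (2 * f t) + v₂ t * Real.cos (2 * f t)))) ∧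
    (∀ f₁ g₁ f₂ g₂ : ℝ → ℝ, MemY x₀ f₁ g₁ → MemY x₀ f₂ g₂ →
      (∫ t in Ioi x₀,
          |(-(v₁ t * Real.sin (2 * f₁ t) + v₂ t * Real.cos (2 * f₁ t))) -
            (-(v₁ t * Real.sin (2 * f₂ t) + v₂ t * Real.cos (2 * f₂ t)))|)
        ≤ (1/2) * ∫ t in Ioi x₀, |g₁ t - g₂ t|) :=
  stmt_2_general x₀ v₁ v₂ hv₁ hv₂ hsmall
end

section
/- Let u, p : ℝ₊ → ℝ and k ≠ 0. Suppose y₂ is a solution of the energy-dependent Schrödinger equation -(y₂^{[1]})' - u y₂^{[1]} + 2k p y₂ = k² y₂ where y₂^{[1]} = y₂' - u y₂, and set y₁ = y₂^{[1]}/k. Then the vector y = (y₁, y₂)ᵗ satisfies the Dirac system σ₂ y' + P y = k y, where σ₂ = [[0,1],[-1,0]] and P = [[0,-u],[-u,2p]]. Conversely, if (y₁,y₂)ᵗ solves this Dirac system, then y₂ solves the energy-dependent Schrödinger equation and y₁ = y₂^{[1]}/k. -/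
/-!
Both systems share the relation `y₂^{[1]} = k y₁`. Under it, `(y₂^{[1]})' = k y₁'`, and the
Schrödinger equation becomes `k` times the second Dirac equation; since `k ≠ 0` the two are equivalent.
-/

namespace EnergyDependentSchrodinger

variable {𝕜 : Type*} [NontriviallyNormedField 𝕜] (u p : 𝕜 → 𝕜) (k : 𝕜)

noncomputable def quasiDeriv (y : 𝕜 → 𝕜) : 𝕜 → 𝕜 := fun x => deriv y x - u x * y x

def IsSchrodingerSolution (y₂ : 𝕜 → 𝕜) : Prop :=
  ∀ x, -deriv (quasiDeriv u y₂) x - u x * quasiDeriv u y₂ x + 2 * k * p x * y₂ x = k ^ 2 * y₂ x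

/-- Componentwise form of `σ₂ y' + P y = k y` with `σ₂ = [[0,1],[-1,0]]`, `P = [[0,-u],[-u,2p]]`. -/
def IsDiracSolution (y₁ y₂ : 𝕜 → 𝕜) : Prop :=
  ∀ x, quasiDeriv u y₂ x = k * y₁ x ∧ -deriv y₁ x - u x * y₁ x + 2 * p x * y₂ x = k * y₂ x

variable {u p k} {y₁ y₂ : 𝕜 → 𝕜}

theorem isSchrodingerSolution_iff_of_quasiDeriv_eq (hk : k ≠ 0)
    (hq : quasiDeriv u y₂ = fun x => k * y₁ x) :
    IsSchrodingerSolution u p k y₂ ↔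
      ∀ x, -deriv y₁ x - u x * y₁ x + 2 * p x * y₂ x = k * y₂ x := by
  have hd : deriv (quasiDeriv u y₂) = fun x => k * deriv y₁ x := by
    rw [hq, deriv_const_mul_field']
  rw [IsSchrodingerSolution, hd, hq]
  refine forall_congr' fun x => ⟨fun h => mul_left_cancel₀ hk ?_, fun h => ?_⟩
  · linear_combination h
  · linear_combination k * h

theorem isDiracSolution_iff (hk : k ≠ 0) :
    IsDiracSolution u p k y₁ y₂ ↔
      (∀ x, y₁ x = quasiDeriv u y₂ x / k) ∧ IsSchrodingerSolution u p k y₂ := by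
  have hrel : (∀ x, y₁ x = quasiDeriv u y₂ x / k) ↔ quasiDeriv u y₂ = fun x => k * y₁ x := by
    simp only [eq_div_iff hk, funext_iff, mul_comm k, eq_comm]
  rw [IsDiracSolution, forall_and, ← funext_iff, ← hrel]
  exact and_congr_right fun h =>
    (isSchrodingerSolution_iff_of_quasiDeriv_eq hk (hrel.1 h)).symm

end EnergyDependentSchrodinger

theorem stmt_7_general (u p : ℝ → ℝ) (k : ℝ) (hk : k ≠ 0)
    (y₁ y₂ : ℝ → ℝ) :
    (((∀ x, -(deriv (fun t => deriv y₂ t - u t * y₂ t)) x -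
          u x * (deriv y₂ x - u x * y₂ x) + 2 * k * p x * y₂ x = k ^ 2 * y₂ x) ∧
      (∀ x, y₁ x = (deriv y₂ x - u x * y₂ x) / k)) →
      (∀ x, deriv y₂ x - u x * y₂ x = k * y₁ x ∧
        -(deriv y₁ x) - u x * y₁ x + 2 * p x * y₂ x = k * y₂ x)) ∧
    ((∀ x, deriv y₂ x - u x * y₂ x = k * y₁ x ∧
        -(deriv y₁ x) - u x * y₁ x + 2 * p x * y₂ x = k * y₂ x) →
      ((∀ x, y₁ x = (deriv y₂ x - u x * y₂ x) / k) ∧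
       (∀ x, -(deriv (fun t => deriv y₂ t - u t * y₂ t)) x -
          u x * (deriv y₂ x - u x * y₂ x) + 2 * k * p x * y₂ x = k ^ 2 * y₂ x))) :=
  ⟨fun ⟨hS, hy₁⟩ => (EnergyDependentSchrodinger.isDiracSolution_iff (p := p) hk).2 ⟨hy₁, hS⟩,
    (EnergyDependentSchrodinger.isDiracSolution_iff hk).1⟩

/-- Equivalence between the energy-dependent Schrödinger equation
`-(y₂^{[1]})' - u y₂^{[1]} + 2kp y₂ = k² y₂` (with `y₂^{[1]} = y₂' - u y₂`)
and the non-canonical Dirac system `σ₂ y' + P y = k y`, i.e. componentwise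
`y₂' - u y₂ = k y₁` and `-y₁' - u y₁ + 2p y₂ = k y₂`, where `y₁ = y₂^{[1]}/k`. -/
theorem stmt_7 (u p : ℝ → ℝ) (k : ℝ) (hk : k ≠ 0)
    (y₁ y₂ : ℝ → ℝ)
    (hy₂ : Differentiable ℝ y₂)
    (hy₂1 : Differentiable ℝ (fun x => deriv y₂ x - u x * y₂ x))
    (hy₁ : Differentiable ℝ y₁) :
    (((∀ x, -(deriv (fun t => deriv y₂ t - u t * y₂ t)) x -
          u x * (deriv y₂ x - u x * y₂ x) + 2 * k * p x * y₂ x = k ^ 2 * y₂ x) ∧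
      (∀ x, y₁ x = (deriv y₂ x - u x * y₂ x) / k)) →
      (∀ x, deriv y₂ x - u x * y₂ x = k * y₁ x ∧
        -(deriv y₁ x) - u x * y₁ x + 2 * p x * y₂ x = k * y₂ x)) ∧
    ((∀ x, deriv y₂ x - u x * y₂ x = k * y₁ x ∧
        -(deriv y₁ x) - u x * y₁ x + 2 * p x * y₂ x = k * y₂ x) →
      ((∀ x, y₁ x = (deriv y₂ x - u x * y₂ x) / k) ∧
       (∀ x, -(deriv (fun t => deriv y₂ t - u t * y₂ t)) x -
          u x * (deriv y₂ x - u x * y₂ x) + 2 * k * p x * y₂ x = k ^ 2 * y₂ x))) :=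
  stmt_7_general u p k hk y₁ y₂
end

section
/- Let u₁, p₁, u₂, p₂ ∈ L¹(ℝ₊) be real-valued, φⱼ(x) = ∫ₓ^∞ pⱼ(t) dt, and vⱼ = (-uⱼ + i pⱼ) e^{-2iφⱼ} for j = 1, 2. If v₁ = v₂ almost everywhere on ℝ₊, then u₁ = u₂ and p₁ = p₂ almost everywhere on ℝ₊. -/
open Complex MeasureTheory Set

lemma aux_one_sub_cos (a : ℝ) : |1 - Real.cos a| ≤ |a| := by
  have h := Real.cos_sq (a/2)
  rw [show 2*(a/2) = a by ring] at h
  have h' := Real.sin_sq (a/2)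
  have h1 : |Real.sin (a/2)| ≤ |a/2| := Real.abs_sin_le_abs
  have h4 : |Real.sin (a/2)| ≤ 1 := abs_le.mpr ⟨Real.neg_one_le_sin _, Real.sin_le_one _⟩
  have h5 : |a/2| = |a|/2 := by rw [abs_div]; norm_num
  have h6 : Real.sin (a/2)^2 = |Real.sin (a/2)|^2 := (_root_.sq_abs _).symm
  have hc1 : Real.cos a ≤ 1 := Real.cos_le_one a
  rw [_root_.abs_of_nonneg (by linarith : (0:ℝ) ≤ 1 - Real.cos a)]
  nlinarith [abs_nonneg (Real.sin (a/2))]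

lemma aux_im (u₁ p₁ u₂ p₂ A B : ℝ)
    (hv : (-(u₁ : ℂ) + I * (p₁ : ℂ)) * exp (-2 * I * (A : ℂ))
        = (-(u₂ : ℂ) + I * (p₂ : ℂ)) * exp (-2 * I * (B : ℂ))) :
    p₁ = p₂ * Real.cos (2*(B-A)) + u₂ * Real.sin (2*(B-A)) := by
  have e1 : ∀ z : ℂ, z * exp (-2 * I * (A:ℂ)) * exp (2 * I * (A:ℂ)) = z := by
    intro z
    rw [mul_assoc, ← Complex.exp_add, show (-2 * I * (A:ℂ) + 2 * I * A) = 0 by ring,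
      Complex.exp_zero, mul_one]
  have key : exp (-2 * I * (B:ℂ)) * exp (2 * I * (A:ℂ))
      = exp (((-(2*(B-A)) : ℝ) : ℂ) * I) := by
    rw [← Complex.exp_add]; congr 1; push_cast; ring
  have h2 : (-(u₁ : ℂ) + I * (p₁ : ℂ))
      = (-(u₂ : ℂ) + I * (p₂ : ℂ)) * exp (((-(2*(B-A)) : ℝ) : ℂ) * I) := by
    rw [← e1 ((-(u₁:ℂ)) + I * (p₁:ℂ)), hv, mul_assoc, key]
  rw [Complex.exp_mul_I, ← Complex.ofReal_cos, ← Complex.ofReal_sin,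
    Real.cos_neg, Real.sin_neg] at h2
  have him := congrArg Complex.im h2
  simp only [Complex.add_im, Complex.mul_im, Complex.neg_im, Complex.neg_re, Complex.ofReal_im,
    Complex.ofReal_re, Complex.I_re, Complex.I_im, Complex.add_re, Complex.ofReal_neg,
    Complex.mul_re] at him
  ring_nf at him ⊢
  linarith

/-- Uniqueness: the map `(u,p) ↦ v = (-u+ip)e^{-2iφ}` with `φ(x) = ∫ₓ^∞ p`
is injective (up to null sets) on pairs of real integrable functions on `ℝ₊`. -/
theorem stmt_12 (u₁ p₁ u₂ p₂ : ℝ → ℝ)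
    (hu₁ : IntegrableOn u₁ (Ioi 0)) (hp₁ : IntegrableOn p₁ (Ioi 0))
    (hu₂ : IntegrableOn u₂ (Ioi 0)) (hp₂ : IntegrableOn p₂ (Ioi 0))
    (φ₁ φ₂ : ℝ → ℝ)
    (hφ₁ : ∀ x, φ₁ x = ∫ t in Ioi x, p₁ t)
    (hφ₂ : ∀ x, φ₂ x = ∫ t in Ioi x, p₂ t)
    (v₁ v₂ : ℝ → ℂ)
    (hv₁ : ∀ x, v₁ x = (-(u₁ x : ℂ) + I * (p₁ x : ℂ)) * exp (-2 * I * (φ₁ x : ℂ)))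
    (hv₂ : ∀ x, v₂ x = (-(u₂ x : ℂ) + I * (p₂ x : ℂ)) * exp (-2 * I * (φ₂ x : ℂ)))
    (heq : ∀ᵐ x ∂(volume.restrict (Ioi (0:ℝ))), v₁ x = v₂ x) :
    (∀ᵐ x ∂(volume.restrict (Ioi (0:ℝ))), u₁ x = u₂ x) ∧
    (∀ᵐ x ∂(volume.restrict (Ioi (0:ℝ))), p₁ x = p₂ x) := by
  classical
  set q : ℝ → ℝ := (Ioi (0:ℝ)).indicator (fun t => p₂ t - p₁ t) with hqdef
  set m : ℝ → ℝ := (Ioi (0:ℝ)).indicator (fun t => 2 * |u₂ t| + 2 * |p₂ t|) with hmdef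
  have hqi : Integrable q := (integrable_indicator_iff measurableSet_Ioi).mpr (hp₂.sub hp₁)
  have hmi : Integrable m := (integrable_indicator_iff measurableSet_Ioi).mpr
    ((hu₂.abs.const_mul 2).add (hp₂.abs.const_mul 2))
  have hm0 : ∀ t, 0 ≤ m t := by
    intro t
    rw [hmdef]
    by_cases ht : t ∈ Ioi (0:ℝ)
    · rw [indicator_of_mem ht]; positivity
    · rw [indicator_of_notMem ht]
  set θ : ℝ → ℝ := fun x => ∫ t in Ioi x, q t with hθdef
  have hθ_eq : ∀ x : ℝ, 0 ≤ x → θ x = φ₂ x - φ₁ x := by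
    intro x hx
    have h1 : θ x = ∫ t in Ioi x, (p₂ t - p₁ t) := by
      rw [hθdef]
      simp only
      rw [hqdef, setIntegral_indicator measurableSet_Ioi,
        inter_eq_self_of_subset_left (Ioi_subset_Ioi hx)]
    rw [h1, hφ₁ x, hφ₂ x,
      integral_sub (hp₂.mono_set (Ioi_subset_Ioi hx)) (hp₁.mono_set (Ioi_subset_Ioi hx))]
  -- the key a.e. differential inequality
  have key : ∀ᵐ t : ℝ, |q t| ≤ m t * |θ t| := by
    have heq' : ∀ᵐ t : ℝ, t ∈ Ioi (0:ℝ) → v₁ t = v₂ t :=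
      (ae_restrict_iff' measurableSet_Ioi).mp heq
    filter_upwards [heq'] with t hvt
    by_cases ht : t ∈ Ioi (0:ℝ)
    · have hv := hvt ht
      rw [hv₁ t, hv₂ t] at hv
      have him := aux_im (u₁ t) (p₁ t) (u₂ t) (p₂ t) (φ₁ t) (φ₂ t) hv
      have hd : θ t = φ₂ t - φ₁ t := hθ_eq t (le_of_lt ht)
      set d : ℝ := φ₂ t - φ₁ t with hddef
      have hqt : q t = p₂ t * (1 - Real.cos (2*d)) - u₂ t * Real.sin (2*d) := by
        rw [hqdef, indicator_of_mem ht]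
        rw [him]; ring
      have e1 : |1 - Real.cos (2*d)| ≤ 2 * |d| := by
        have := aux_one_sub_cos (2*d)
        calc |1 - Real.cos (2*d)| ≤ |2*d| := this
          _ = 2 * |d| := by rw [abs_mul]; norm_num
      have e2 : |Real.sin (2*d)| ≤ 2 * |d| := by
        calc |Real.sin (2*d)| ≤ |2*d| := Real.abs_sin_le_abs
          _ = 2 * |d| := by rw [abs_mul]; norm_num
      have hmt : m t = 2 * |u₂ t| + 2 * |p₂ t| := by rw [hmdef, indicator_of_mem ht]
      rw [hqt, hmt, hd]
      calc |p₂ t * (1 - Real.cos (2*d)) - u₂ t * Real.sin (2*d)|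
          ≤ |p₂ t * (1 - Real.cos (2*d))| + |u₂ t * Real.sin (2*d)| := abs_sub _ _
        _ = |p₂ t| * |1 - Real.cos (2*d)| + |u₂ t| * |Real.sin (2*d)| := by
            rw [abs_mul, abs_mul]
        _ ≤ (2 * |u₂ t| + 2 * |p₂ t|) * |d| := by
            nlinarith [abs_nonneg (p₂ t), abs_nonneg (u₂ t), abs_nonneg d, e1, e2]
    · have hq0 : q t = 0 := by rw [hqdef, indicator_of_notMem ht]
      have hm0' : m t = 0 := by rw [hmdef, indicator_of_notMem ht]
      rw [hq0, hm0']; simp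
  -- global bound
  set C : ℝ := ∫ t, |q t| with hCdef
  have hC0 : 0 ≤ C := integral_nonneg fun t => abs_nonneg _
  have hC : ∀ x : ℝ, |θ x| ≤ C := by
    intro x
    calc |θ x| ≤ ∫ t in Ioi x, |q t| := by
          simpa [Real.norm_eq_abs] using norm_integral_le_integral_norm (μ := volume.restrict (Ioi x)) q
      _ ≤ C := setIntegral_le_integral hqi.abs (Filter.Eventually.of_forall fun t => abs_nonneg _)
  -- step lemma
  have step : ∀ a c : ℝ, 0 ≤ a → a ≤ c → (∀ x, c ≤ x → θ x = 0) →
      (∫ t in Ioc a c, m t) ≤ 1/2 → ∀ x, a ≤ x → θ x = 0 := by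
    intro a c ha hac hz hint
    have bound : ∀ n : ℕ, ∀ x, a ≤ x → |θ x| ≤ C / 2^n := by
      intro n
      induction n with
      | zero => intro x _; simpa using hC x
      | succ n ih =>
        intro x hx
        by_cases hxc : c ≤ x
        · rw [hz x hxc]; simp; positivity
        · push_neg at hxc
          have hsplit : θ x = ∫ t in Ioc x c, q t := by
            have hun : Ioc x c ∪ Ioi c = Ioi x := Ioc_union_Ioi_eq_Ioi (le_of_lt hxc)
            have := setIntegral_union (f := q) (μ := volume) (s := Ioc x c) (t := Ioi c)
              Ioc_disjoint_Ioi_same measurableSet_Ioi hqi.integrableOn hqi.integrableOn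
            rw [hun] at this
            have hzc : (∫ t in Ioi c, q t) = 0 := hz c le_rfl
            rw [hθdef]; simp only; rw [this, hzc, add_zero]
          have hmono : (∫ t in Ioc x c, m t) ≤ ∫ t in Ioc a c, m t :=
            setIntegral_mono_set hmi.integrableOn
              (Filter.Eventually.of_forall fun t => hm0 t)
              (HasSubset.Subset.eventuallyLE (Ioc_subset_Ioc_left hx))
          calc |θ x| = |∫ t in Ioc x c, q t| := by rw [hsplit]
            _ ≤ ∫ t in Ioc x c, |q t| := by
                simpa [Real.norm_eq_abs] using
                  norm_integral_le_integral_norm (μ := volume.restrict (Ioc x c)) q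
            _ ≤ ∫ t in Ioc x c, m t * (C / 2^n) := by
                refine setIntegral_mono_ae_restrict hqi.abs.integrableOn
                  (hmi.mul_const _).integrableOn ?_
                filter_upwards [ae_restrict_of_ae key, ae_restrict_mem measurableSet_Ioc]
                  with t h1 h2
                exact h1.trans (mul_le_mul_of_nonneg_left
                  (ih t (hx.trans (le_of_lt h2.1))) (hm0 t))
            _ = (∫ t in Ioc x c, m t) * (C / 2^n) := integral_mul_const _ _
            _ ≤ (1/2) * (C / 2^n) := by
                apply mul_le_mul_of_nonneg_right (hmono.trans hint); positivity
            _ = C / 2^(n+1) := by ring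
    intro x hx
    by_contra hne
    have hpos : 0 < |θ x| := abs_pos.mpr hne
    obtain ⟨n, hn⟩ := pow_unbounded_of_one_lt (C / |θ x|) (one_lt_two (α := ℝ))
    have h2n : (0:ℝ) < 2^n := by positivity
    have h1 : |θ x| * 2^n ≤ C := (le_div_iff₀ h2n).mp (bound n x hx)
    rw [div_lt_iff₀ hpos] at hn
    nlinarith
  -- tail: find c₀ ≥ 0 with small tail integral of m, and θ = 0 on [c₀, ∞)
  have htail : Filter.Tendsto (fun n : ℕ => ∫ t in Ioi (n:ℝ), m t) Filter.atTop (nhds 0) := by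
    have hrw : ∀ n : ℕ, (∫ t in Ioi (n:ℝ), m t) = ∫ t, (Ioi (n:ℝ)).indicator m t := by
      intro n; exact (integral_indicator measurableSet_Ioi).symm
    simp only [hrw]
    have h0 : (0:ℝ) = ∫ t : ℝ, (0:ℝ) := by simp
    rw [h0]
    apply tendsto_integral_of_dominated_convergence m
      (fun n => hmi.aestronglyMeasurable.indicator measurableSet_Ioi) hmi
    · intro n
      filter_upwards with t
      by_cases ht : t ∈ Ioi (n:ℝ)
      · rw [indicator_of_mem ht, Real.norm_eq_abs, _root_.abs_of_nonneg (hm0 t)]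
      · rw [indicator_of_notMem ht]; simpa using hm0 t
    · filter_upwards with t
      obtain ⟨N, hN⟩ := exists_nat_gt t
      refine Filter.Tendsto.congr' ?_ tendsto_const_nhds
      rw [Filter.EventuallyEq, Filter.eventually_atTop]
      refine ⟨N, fun n hn => ?_⟩
      have : t ∉ Ioi (n:ℝ) := by
        simp only [mem_Ioi, not_lt]
        exact le_trans (le_of_lt hN) (by exact_mod_cast hn)
      rw [indicator_of_notMem this]
  obtain ⟨n₀, hn₀⟩ : ∃ n₀ : ℕ, (∫ t in Ioi ((n₀:ℕ):ℝ), m t) ≤ 1/2 := by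
    have := htail.eventually_lt_const (show (0:ℝ) < 1/2 by norm_num)
    rcases this.exists with ⟨n, hn⟩
    exact ⟨n, le_of_lt hn⟩
  have hZtail : ∀ x, (n₀:ℝ) ≤ x → θ x = 0 := by
    have bound : ∀ n : ℕ, ∀ x, (n₀:ℝ) ≤ x → |θ x| ≤ C / 2^n := by
      intro n
      induction n with
      | zero => intro x _; simpa using hC x
      | succ n ih =>
        intro x hx
        have hmono : (∫ t in Ioi x, m t) ≤ ∫ t in Ioi (n₀:ℝ), m t :=
          setIntegral_mono_set hmi.integrableOn
            (Filter.Eventually.of_forall fun t => hm0 t)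
            (HasSubset.Subset.eventuallyLE (Ioi_subset_Ioi hx))
        calc |θ x| ≤ ∫ t in Ioi x, |q t| := by
              simpa [Real.norm_eq_abs] using
                norm_integral_le_integral_norm (μ := volume.restrict (Ioi x)) q
          _ ≤ ∫ t in Ioi x, m t * (C / 2^n) := by
              refine setIntegral_mono_ae_restrict hqi.abs.integrableOn
                (hmi.mul_const _).integrableOn ?_
              filter_upwards [ae_restrict_of_ae key, ae_restrict_mem measurableSet_Ioi]
                with t h1 h2
              exact h1.trans (mul_le_mul_of_nonneg_left
                (ih t (hx.trans (le_of_lt h2))) (hm0 t))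
          _ = (∫ t in Ioi x, m t) * (C / 2^n) := integral_mul_const _ _
          _ ≤ (1/2) * (C / 2^n) := by
              apply mul_le_mul_of_nonneg_right (hmono.trans hn₀); positivity
          _ = C / 2^(n+1) := by ring
    intro x hx
    by_contra hne
    have hpos : 0 < |θ x| := abs_pos.mpr hne
    obtain ⟨n, hn⟩ := pow_unbounded_of_one_lt (C / |θ x|) (one_lt_two (α := ℝ))
    have h2n : (0:ℝ) < 2^n := by positivity
    have h1 : |θ x| * 2^n ≤ C := (le_div_iff₀ h2n).mp (bound n x hx)
    rw [div_lt_iff₀ hpos] at hn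
    nlinarith
  -- absolute continuity: a small step size r
  obtain ⟨δ, δpos, hδ⟩ := exists_pos_setLIntegral_lt_of_measure_lt
    (f := fun t => ENNReal.ofReal (m t)) (μ := volume)
    (by
      have := (hasFiniteIntegral_iff_ofReal
        (Filter.Eventually.of_forall hm0)).mp hmi.hasFiniteIntegral
      exact this.ne)
    (ε := ENNReal.ofReal (1/2)) (by simp)
  have hAC : ∀ s : Set ℝ, volume s < δ → (∫ t in s, m t) ≤ 1/2 := by
    intro s hs
    have h1 : ENNReal.ofReal (∫ t in s, m t) = ∫⁻ t in s, ENNReal.ofReal (m t) :=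
      ofReal_integral_eq_lintegral_ofReal hmi.integrableOn
        (Filter.Eventually.of_forall hm0)
    have h2 := hδ s hs
    rw [← h1] at h2
    have := (ENNReal.ofReal_lt_ofReal_iff (by norm_num)).mp h2
    linarith
  obtain ⟨ε', hε'0, hε'δ⟩ := exists_between δpos
  have hε'top : ε' ≠ ⊤ := (lt_of_lt_of_le hε'δ le_top).ne
  set r : ℝ := ε'.toReal with hrdef
  have hr0 : 0 < r := ENNReal.toReal_pos hε'0.ne' hε'top
  have hIocsmall : ∀ a c : ℝ, c - a ≤ r → (∫ t in Ioc a c, m t) ≤ 1/2 := by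
    intro a c hca
    apply hAC
    rw [Real.volume_Ioc]
    calc ENNReal.ofReal (c - a) ≤ ENNReal.ofReal r := ENNReal.ofReal_le_ofReal hca
      _ = ε' := ENNReal.ofReal_toReal hε'top
      _ < δ := hε'δ
  -- downward induction
  have hdown : ∀ k : ℕ, ∀ x, max 0 ((n₀:ℝ) - k * r) ≤ x → θ x = 0 := by
    intro k
    induction k with
    | zero =>
      intro x hx
      apply hZtail
      simpa using hx
    | succ k ih =>
      set a : ℝ := max 0 ((n₀:ℝ) - (k+1) * r) with hadef
      set c : ℝ := max 0 ((n₀:ℝ) - k * r) with hcdef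
      have hac : a ≤ c := by
        apply max_le_max le_rfl
        have : (k:ℝ) * r ≤ (k+1) * r := by nlinarith
        linarith
      have hca : c - a ≤ r := by
        have h1 : c ≤ max 0 ((n₀:ℝ) - (k+1) * r) + r := by
          apply max_le
          · linarith [le_max_left (0:ℝ) ((n₀:ℝ) - (k+1) * r), hr0.le]
          · calc (n₀:ℝ) - k * r = ((n₀:ℝ) - (k+1) * r) + r := by ring
              _ ≤ max 0 ((n₀:ℝ) - (k+1) * r) + r := by
                  gcongr; exact le_max_right _ _
        linarith
      intro x hx
      push_cast at hx
      exact step a c (le_max_left _ _) hac ih (hIocsmall a c hca) x hx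
  have hZ0 : ∀ x : ℝ, 0 ≤ x → θ x = 0 := by
    obtain ⟨k, hk⟩ := exists_nat_gt ((n₀:ℝ) / r)
    intro x hx
    apply hdown k
    have : (n₀:ℝ) - k * r ≤ 0 := by
      rw [div_lt_iff₀ hr0] at hk
      linarith
    rw [max_eq_left this]
    exact hx
  -- conclude
  have hφeq : ∀ x : ℝ, 0 < x → φ₁ x = φ₂ x := by
    intro x hx
    have := hθ_eq x hx.le
    rw [hZ0 x hx.le] at this
    linarith
  have heq' : ∀ᵐ x ∂(volume.restrict (Ioi (0:ℝ))),
      u₁ x = u₂ x ∧ p₁ x = p₂ x := by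
    rw [ae_restrict_iff' measurableSet_Ioi] at heq ⊢
    filter_upwards [heq] with x hvx hx
    have hv := hvx hx
    rw [hv₁ x, hv₂ x, hφeq x hx] at hv
    have hcancel := mul_right_cancel₀ (Complex.exp_ne_zero _) hv
    rw [Complex.ext_iff] at hcancel
    obtain ⟨hre, him⟩ := hcancel
    simp only [Complex.add_re, Complex.add_im, Complex.neg_re, Complex.neg_im, Complex.mul_re,
      Complex.mul_im, Complex.I_re, Complex.I_im, Complex.ofReal_re, Complex.ofReal_im] at hre him
    constructor <;> linarith
  exact ⟨heq'.mono fun x h => h.1, heq'.mono fun x h => h.2⟩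
end

section
/- Let r ∈ L¹(ℝ₊), η : ℝ₊ → ℝ measurable, and let θ be an absolutely continuous solution of θ'(x) = -2 r(x) sin(θ(x)) cos(θ(x) + η(x)) on ℝ₊ with θ(x) → 0 as x → ∞. Then θ ≡ 0 on ℝ₊. -/
/-!
Passing to the limit at infinity in the integral equation gives `θ x = -∫_{x}^∞ f`, and with
`|f| ≤ r |θ|` this yields `|θ x| ≤ ∫_{x}^∞ r |θ|`. On an interval `S` beyond which `θ` already
vanishes and with `∫_S r < 1`, this bounds `sup_S |θ|` by a fraction of itself, so `θ = 0`
on `S`. Integrability of `r` provides such an interval near infinity, and continuity of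
`c ↦ ∫_c^b r` lets the vanishing propagate down to the base point.
-/

open MeasureTheory Set Filter Topology

section Contraction

variable {α : Type*} [MeasurableSpace α] {μ : Measure α} {S : Set α} {g h k : α → ℝ}

theorem eqOn_zero_of_abs_le_setIntegral_abs (hS : MeasurableSet S) (hk : IntegrableOn k S μ)
    (hk0 : 0 ≤ k) (hk1 : ∫ t in S, k t ∂μ < 1) (hg : BddAbove ((fun x => |g x|) '' S))
    (hhk : ∀ t ∈ S, |h t| ≤ k t * |g t|) (hgh : ∀ x ∈ S, |g x| ≤ ∫ t in S, |h t| ∂μ) :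
    EqOn g 0 S := by
  intro x hx
  set M := sSup ((fun x => |g x|) '' S)
  have hgM : ∀ y ∈ S, |g y| ≤ M := fun y hy => le_csSup hg (mem_image_of_mem _ hy)
  have hM : M ≤ M * ∫ t in S, k t ∂μ := by
    refine csSup_le ((nonempty_of_mem hx).image _) ?_
    rintro _ ⟨y, hy, rfl⟩
    have hhM : ∀ᵐ t ∂μ.restrict S, |h t| ≤ k t * M :=
      (ae_restrict_iff' hS).2 <| .of_forall fun t ht =>
        (hhk t ht).trans (mul_le_mul_of_nonneg_left (hgM t ht) (hk0 t))
    calc |g y| ≤ ∫ t in S, |h t| ∂μ := hgh y hy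
      _ ≤ ∫ t in S, k t * M ∂μ :=
        integral_mono_of_nonneg (.of_forall fun t => abs_nonneg _) (hk.mul_const M) hhM
      _ = M * ∫ t in S, k t ∂μ := by rw [integral_mul_const, mul_comm]
  have hM0 : M ≤ 0 := by nlinarith [(abs_nonneg _).trans (hgM x hx)]
  exact abs_nonpos_iff.mp ((hgM x hx).trans hM0)

end Contraction

theorem Ioi_subset_of_forall_exists_lt {s : Set ℝ} {a X : ℝ} (hX : Ioi X ⊆ s)
    (hstep : ∀ b, a < b → Ioi b ⊆ s → ∃ c < b, Ioi c ⊆ s) : Ioi a ⊆ s := by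
  set A := {c | a ≤ c ∧ Ioi c ⊆ s}
  have hA : A.Nonempty := ⟨max a X, le_max_left _ _, (Ioi_subset_Ioi (le_max_right _ _)).trans hX⟩
  have hAa : BddBelow A := ⟨a, fun c hc => hc.1⟩
  have hb : Ioi (sInf A) ⊆ s := fun y hy => by
    obtain ⟨c, hc, hcy⟩ := exists_lt_of_csInf_lt hA hy
    exact hc.2 hcy
  refine le_or_gt (sInf A) a |>.elim (fun h => (Ioi_subset_Ioi h).trans hb) fun hab => ?_
  obtain ⟨c, hcb, hc⟩ := hstep _ hab hb
  have hcA : max a c ∈ A := ⟨le_max_left _ _, (Ioi_subset_Ioi (le_max_right _ _)).trans hc⟩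
  exact absurd (csInf_le hAa hcA) (not_le.mpr (max_lt hab hcb))

theorem exists_setIntegral_Ioc_lt {r : ℝ → ℝ} {a b ε : ℝ} (hr : IntegrableOn r (Icc a b))
    (hab : a < b) (hε : 0 < ε) : ∃ c ∈ Ico a b, ∫ t in Ioc c b, r t < ε := by
  have hcont : ContinuousWithinAt (fun c => ∫ t in c..b, r t) (Ico a b) b :=
    (intervalIntegral.continuousOn_primitive_interval_left (a := a)
      (by rwa [uIcc_of_le hab.le]) b right_mem_uIcc).mono
      (by simpa [uIcc_of_le hab.le] using Ico_subset_Icc_self)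
  have := right_nhdsWithin_Ico_neBot hab
  obtain ⟨c, hc, hcb⟩ := ((hcont.eventually (gt_mem_nhds (by simpa using hε))).and
    self_mem_nhdsWithin).exists
  exact ⟨c, hcb, by rwa [← intervalIntegral.integral_of_le hcb.2.le]⟩

section IntegralEquation

variable {a : ℝ} {θ f r : ℝ → ℝ}

theorem eq_neg_setIntegral_Ioi_of_tendsto (hf : IntegrableOn f (Ici a))
    (hθ : ∀ x ∈ Ici a, θ x = θ a + ∫ t in Ioc a x, f t) (hlim : Tendsto θ atTop (𝓝 0))
    {x : ℝ} (hx : a ≤ x) : θ x = -∫ t in Ioi x, f t := by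
  have hfa : IntegrableOn f (Ioi a) := hf.mono_set Ioi_subset_Ici_self
  have hθ' : ∀ y ∈ Ici a, θ y = θ a + ∫ t in a..y, f t := fun y hy => by
    rw [intervalIntegral.integral_of_le hy, hθ y hy]
  have htot : θ a + ∫ t in Ioi a, f t = 0 :=
    tendsto_nhds_unique ((tendsto_const_nhds.add (intervalIntegral_tendsto_integral_Ioi a hfa
      tendsto_id)).congr' (eventually_ge_atTop a |>.mono fun y hy => (hθ' y hy).symm)) hlim
  rw [hθ' x hx, ← intervalIntegral.integral_Ioi_sub_Ioi hfa hx]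
  linarith

theorem eqOn_zero_of_abs_le_mul_of_tendsto (hr : IntegrableOn r (Ici a)) (hr0 : 0 ≤ r)
    (hf : IntegrableOn f (Ici a)) (hfr : ∀ t, |f t| ≤ r t * |θ t|)
    (hθ : ∀ x ∈ Ici a, θ x = θ a + ∫ t in Ioc a x, f t) (hlim : Tendsto θ atTop (𝓝 0)) :
    EqOn θ 0 (Ici a) := by
  have hrep := fun {x} (hx : a ≤ x) => eq_neg_setIntegral_Ioi_of_tendsto hf hθ hlim hx
  have hsub : ∀ {x}, a ≤ x → Ioi x ⊆ Ici a := fun hx =>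
    (Ioi_subset_Ioi hx).trans Ioi_subset_Ici_self
  have htail_anti : ∀ {x y}, a ≤ x → x ≤ y → ∫ t in Ioi y, |f t| ≤ ∫ t in Ioi x, |f t| :=
    fun hx hxy => setIntegral_mono_set (hf.mono_set (hsub hx)).abs
      (.of_forall fun _ => abs_nonneg _) (Ioi_subset_Ioi hxy).eventuallyLE
  have habs : ∀ {x}, a ≤ x → |θ x| ≤ ∫ t in Ioi x, |f t| := fun hx => by
    rw [hrep hx, abs_neg]; exact abs_integral_le_integral_abs
  have hbdd : ∀ {S}, S ⊆ Ici a → BddAbove ((fun x => |θ x|) '' S) := fun hS =>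
    ⟨∫ t in Ioi a, |f t|, by
      rintro _ ⟨x, hx, rfl⟩; exact (habs (hS hx)).trans (htail_anti le_rfl (hS hx))⟩
  have hf0 : ∀ {c}, EqOn θ 0 (Ioi c) → EqOn f 0 (Ioi c) := fun h t ht =>
    abs_nonpos_iff.mp (by simpa [h ht] using hfr t)
  obtain ⟨X, hX, hXa⟩ := ((tendsto_integral_Ioi_zero (f := r) tendsto_id).eventually
    (gt_mem_nhds one_pos) |>.and (eventually_ge_atTop a)).exists
  have hX0 : EqOn θ 0 (Ioi X) :=
    eqOn_zero_of_abs_le_setIntegral_abs measurableSet_Ioi (hr.mono_set (hsub hXa)) hr0 hX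
      (hbdd (hsub hXa)) (fun t _ => hfr t)
      fun x hx => (habs (hXa.trans hx.le)).trans (htail_anti hXa hx.le)
  have hstep : ∀ b, a < b → EqOn θ 0 (Ioi b) → ∃ c < b, EqOn θ 0 (Ioi c) := by
    intro b hab hb
    obtain ⟨c, ⟨hac, hcb⟩, hc⟩ :=
      exists_setIntegral_Ioc_lt (hr.mono_set Icc_subset_Ici_self) hab one_pos
    have hIoc : Ioc c b ⊆ Ici a := fun t ht => hac.trans ht.1.le
    have htail_eq : ∫ t in Ioi c, |f t| = ∫ t in Ioc c b, |f t| :=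
      setIntegral_eq_of_subset_of_forall_sdiff_eq_zero measurableSet_Ioi Ioc_subset_Ioi_self
        fun t ht => by simp [hf0 hb (not_le.mp fun h => ht.2 ⟨ht.1, h⟩)]
    have hcb0 : EqOn θ 0 (Ioc c b) :=
      eqOn_zero_of_abs_le_setIntegral_abs measurableSet_Ioc (hr.mono_set hIoc) hr0 hc
        (hbdd hIoc) (fun t _ => hfr t)
        fun x hx => htail_eq ▸ (habs (hIoc hx)).trans (htail_anti hac hx.1.le)
    exact ⟨c, hcb, Ioc_union_Ioi_eq_Ioi hcb.le ▸ hcb0.union hb⟩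
  have hIoi : EqOn θ 0 (Ioi a) := Ioi_subset_of_forall_exists_lt hX0 hstep
  intro x hx
  rcases (mem_Ici.mp hx).eq_or_lt with rfl | hax
  · simp [hrep le_rfl, setIntegral_eq_zero_of_forall_eq_zero (hf0 hIoi)]
  · exact hIoi hax

end IntegralEquation

theorem abs_mul_sin_mul_cos_add_le (r θ η : ℝ) :
    |-2 * r * Real.sin θ * Real.cos (θ + η)| ≤ 2 * |r| * |θ| := by
  rw [abs_mul, abs_mul, abs_mul, abs_neg, abs_two]
  calc 2 * |r| * |Real.sin θ| * |Real.cos (θ + η)| ≤ 2 * |r| * |θ| * 1 := by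
        gcongr 2 * |r| * ?_ * ?_
        exacts [Real.abs_sin_le_abs, Real.abs_cos_le_one _]
    _ = 2 * |r| * |θ| := mul_one _

theorem stmt_13_general (r η θ : ℝ → ℝ)
    (hr : IntegrableOn r (Ici 0))
    (hint : IntegrableOn
      (fun t => -2 * r t * Real.sin (θ t) * Real.cos (θ t + η t)) (Ici 0))
    (hAC : ∀ x ∈ Ici (0:ℝ),
      θ x = θ 0 + ∫ t in Ioc (0:ℝ) x, -2 * r t * Real.sin (θ t) * Real.cos (θ t + η t))
    (hlim : Filter.Tendsto θ Filter.atTop (nhds 0)) :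
    ∀ x ∈ Ici (0:ℝ), θ x = 0 :=
  eqOn_zero_of_abs_le_mul_of_tendsto (hr.abs.const_mul 2) (fun t => by positivity) hint
    (fun t => by simpa only [mul_assoc] using abs_mul_sin_mul_cos_add_le (r t) (θ t) (η t))
    hAC hlim

/-- If `r ∈ L¹(ℝ₊)`, `η` is measurable, and `θ` is an absolutely continuous
solution of `θ' = -2 r sin(θ) cos(θ + η)` on `ℝ₊` with `θ(x) → 0` as `x → ∞`,
then `θ ≡ 0` on `ℝ₊`. Absolute continuity is expressed via the fundamental
theorem of calculus identity with the (integrable) right-hand side. -/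
theorem stmt_13 (r η θ : ℝ → ℝ)
    (hr : IntegrableOn r (Ici 0)) (hη : Measurable η)
    (hint : IntegrableOn
      (fun t => -2 * r t * Real.sin (θ t) * Real.cos (θ t + η t)) (Ici 0))
    (hAC : ∀ x ∈ Ici (0:ℝ),
      θ x = θ 0 + ∫ t in Ioc (0:ℝ) x, -2 * r t * Real.sin (θ t) * Real.cos (θ t + η t))
    (hlim : Filter.Tendsto θ Filter.atTop (nhds 0)) :
    ∀ x ∈ Ici (0:ℝ), θ x = 0 :=
  stmt_13_general r η θ hr hint hAC hlim
end
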